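/- arXiv:math/0401053 — 5 statements merged into one kernel-verified Lean document; each statement's English description precedes it below -/
import Mathlib

section
/- If θ ∈ ℝ satisfies |θ| < liminf_{n→∞} log r(n), then the doubly infinite series Z(θ) := ∑_{z∈ℤ} e^{θz}/r(z)! converges (the family (e^{θz}/r(z)!)_{z∈ℤ} is summable). -/
open Real Filter

/-- The generalized factorial `r(z)! := ∏_{y=1}^{|z|} r(y)`. -/
noncomputable def rfact (r : ℤ → ℝ) (z : ℤ) : ℝ :=
  ∏ y ∈ Finset.range z.natAbs, r (y + 1)

lemma rfact_pos (r : ℤ → ℝ) (hpos : ∀ z : ℤ, 0 < r z) (z : ℤ) : 0 < rfact r z :=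
  Finset.prod_pos fun _ _ => hpos _

lemma rfact_neg (r : ℤ → ℝ) (z : ℤ) : rfact r (-z) = rfact r z := by
  simp [rfact]

lemma summable_aux (r : ℤ → ℝ) (hpos : ∀ z : ℤ, 0 < r z) (θ : ℝ)
    (hθ : ((|θ| : ℝ) : EReal) <
      Filter.liminf (fun n : ℕ => (Real.log (r (n : ℤ)) : EReal)) Filter.atTop) :
    Summable (fun n : ℕ => Real.exp (|θ| * n) / rfact r n) := by
  obtain ⟨c, hc1, hc2⟩ := EReal.exists_between_coe_real hθ
  have hev : ∀ᶠ n : ℕ in atTop, (c : EReal) < (Real.log (r (n : ℤ)) : EReal) :=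
    Filter.eventually_lt_of_lt_liminf hc2
  have hev' : ∀ᶠ n : ℕ in atTop, (c : EReal) < (Real.log (r ((n + 1 : ℕ) : ℤ)) : EReal) :=
    (tendsto_add_atTop_nat 1).eventually hev
  have hθc : |θ| < c := by exact_mod_cast hc1
  apply summable_of_ratio_norm_eventually_le (r := Real.exp (|θ| - c))
  · rw [Real.exp_lt_one_iff]; linarith
  · filter_upwards [hev'] with n hn
    have hrn : Real.exp c < r ((n : ℤ) + 1) := by
      have h1 : c < Real.log (r ((n + 1 : ℕ) : ℤ)) := by exact_mod_cast hn
      have := Real.exp_lt_exp.mpr h1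
      rwa [Real.exp_log (hpos _), Nat.cast_add, Nat.cast_one] at this
    have hF : 0 < rfact r n := rfact_pos r hpos n
    have hsplit : rfact r ((n + 1 : ℕ) : ℤ) = rfact r n * r ((n : ℤ) + 1) := by
      rw [rfact, rfact, Int.natAbs_natCast, Int.natAbs_natCast, Finset.prod_range_succ]
    have hFR : 0 < rfact r ((n + 1 : ℕ) : ℤ) := rfact_pos r hpos _
    rw [Real.norm_eq_abs, Real.norm_eq_abs,
      abs_of_pos (div_pos (Real.exp_pos _) hFR),
      abs_of_pos (div_pos (Real.exp_pos _) hF), hsplit]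
    have hec : (0:ℝ) < Real.exp c := Real.exp_pos c
    calc Real.exp (|θ| * ((n + 1 : ℕ) : ℝ)) / (rfact r n * r ((n : ℤ) + 1))
        = (Real.exp (|θ| * n) / rfact r n) * (Real.exp |θ| / r ((n : ℤ) + 1)) := by
          push_cast
          rw [mul_add, mul_one, Real.exp_add]
          field_simp
      _ ≤ (Real.exp (|θ| * n) / rfact r n) * (Real.exp |θ| / Real.exp c) := by
          gcongr
      _ = Real.exp (|θ| - c) * (Real.exp (|θ| * n) / rfact r n) := by
          rw [Real.exp_sub]; ring

theorem summable_partition_function (r : ℤ → ℝ) (hpos : ∀ z : ℤ, 0 < r z)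
    (hrel : ∀ z : ℤ, r z * r (-z + 1) = 1) (θ : ℝ)
    (hθ : ((|θ| : ℝ) : EReal) <
      Filter.liminf (fun n : ℕ => (Real.log (r (n : ℤ)) : EReal)) Filter.atTop) :
    Summable (fun z : ℤ => Real.exp (θ * z) / rfact r z) := by
  have hs := summable_aux r hpos θ hθ
  apply Summable.of_nat_of_neg_add_one
  · apply hs.of_nonneg_of_le
    · intro n; exact (div_pos (Real.exp_pos _) (rfact_pos r hpos _)).le
    · intro n
      have h1 : θ * (((n : ℤ) : ℝ)) ≤ |θ| * n := by
        push_cast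
        exact mul_le_mul_of_nonneg_right (le_abs_self θ) (Nat.cast_nonneg n)
      gcongr
      exact (rfact_pos r hpos _).le
  · have hs2 := (summable_nat_add_iff
        (f := fun n : ℕ => Real.exp (|θ| * n) / rfact r n) 1).2 hs
    apply hs2.of_nonneg_of_le
    · intro n; exact (div_pos (Real.exp_pos _) (rfact_pos r hpos _)).le
    · intro n
      have hd : rfact r (-((n : ℤ) + 1)) = rfact r ((n + 1 : ℕ) : ℤ) := by
        rw [rfact_neg]; norm_cast
      have h1 : θ * ((-((n : ℤ) + 1) : ℤ) : ℝ) ≤ |θ| * ((n + 1 : ℕ) : ℝ) := by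
        push_cast
        have h2 : -θ ≤ |θ| := neg_le_abs θ
        nlinarith [Nat.cast_nonneg (α := ℝ) n]
      rw [show (-(((n:ℤ)) + 1) : ℤ) = -((n : ℤ) + 1) by ring, hd]
      gcongr
      exact (rfact_pos r hpos _).le
end

section
/- Suppose the rate function r is strictly positive, satisfies r(z)·r(−z+1) = 1 for all z ∈ ℤ, and θ, θ' ∈ ℝ are such that both Z(θ) and Z(θ') converge. If θ' ≠ θ and μ^{(θ')}(z) = μ^{(θ)}(z−1) for all z ∈ ℤ, then with β := θ' − θ one has β > 0 and r(z) = e^{−β/2}·e^{βz} for every z ∈ ℤ; that is, the shift relation forces the exponential bricklayers' rate function. -/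
open Real

/-- The partition function `Z(θ) := ∑_{z ∈ ℤ} e^{θ z} / r(z)!`. -/
noncomputable def Zfun (r : ℤ → ℝ) (θ : ℝ) : ℝ :=
  ∑' z : ℤ, Real.exp (θ * z) / rfact r z

/-- The single-site probability mass function `μ^{(θ)}(z) := e^{θ z} / (Z(θ) r(z)!)`. -/
noncomputable def mu (r : ℤ → ℝ) (θ : ℝ) (z : ℤ) : ℝ :=
  Real.exp (θ * z) / (Zfun r θ * rfact r z)

theorem shift_forces_exponential (r : ℤ → ℝ) (hpos : ∀ z : ℤ, 0 < r z)
    (hrel : ∀ z : ℤ, r z * r (-z + 1) = 1) (θ θ' : ℝ)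
    (hZ : Summable (fun z : ℤ => Real.exp (θ * z) / rfact r z))
    (hZ' : Summable (fun z : ℤ => Real.exp (θ' * z) / rfact r z))
    (hne : θ' ≠ θ)
    (hshift : ∀ z : ℤ, mu r θ' z = mu r θ (z - 1)) :
    0 < θ' - θ ∧
    ∀ z : ℤ, r z = Real.exp (-(θ' - θ) / 2) * Real.exp ((θ' - θ) * z) := by
  set β := θ' - θ with hβ
  have hrf : ∀ z : ℤ, 0 < rfact r z := fun z =>
    Finset.prod_pos (fun i _ => hpos _)
  have hZpos : 0 < Zfun r θ :=
    Summable.tsum_pos hZ (fun z => le_of_lt (div_pos (exp_pos _) (hrf z))) 0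
      (div_pos (exp_pos _) (hrf 0))
  have hZ'pos : 0 < Zfun r θ' :=
    Summable.tsum_pos hZ' (fun z => le_of_lt (div_pos (exp_pos _) (hrf z))) 0
      (div_pos (exp_pos _) (hrf 0))
  -- step lemma
  have hstep : ∀ z : ℤ, rfact r z = rfact r (z - 1) * r z := by
    intro z
    rcases le_or_gt 1 z with hz | hz
    · obtain ⟨n, hn⟩ := Int.le.dest hz
      have h1 : z.natAbs = n + 1 := by omega
      have h2 : (z - 1).natAbs = n := by omega
      have h3 : ((n : ℤ) + 1) = z := by omega
      rw [rfact, rfact, h1, h2, Finset.prod_range_succ, h3]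
    · have hz0 : z ≤ 0 := by omega
      have h1 : (z - 1).natAbs = z.natAbs + 1 := by omega
      have h2 : ((z.natAbs : ℤ) + 1) = -z + 1 := by omega
      have : rfact r (z - 1) = rfact r z * r (-z + 1) := by
        rw [rfact, rfact, h1, Finset.prod_range_succ, h2]
      rw [this, mul_assoc]
      have := hrel z
      rw [mul_comm (r z)] at this
      rw [this, mul_one]
  set C := Real.exp θ * Zfun r θ / Zfun r θ' with hCdef
  have hCpos : 0 < C := div_pos (mul_pos (exp_pos _) hZpos) hZ'pos
  have key : ∀ z : ℤ, r z = C * Real.exp (β * z) := by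
    intro z
    have h := hshift z
    rw [mu, mu, hstep z] at h
    push_cast at h
    have hne1 : Zfun r θ' * (rfact r (z - 1) * r z) ≠ 0 :=
      ne_of_gt (mul_pos hZ'pos (mul_pos (hrf _) (hpos _)))
    have hne2 : Zfun r θ * rfact r (z - 1) ≠ 0 :=
      ne_of_gt (mul_pos hZpos (hrf _))
    rw [div_eq_div_iff hne1 hne2] at h
    have hrfne : rfact r (z - 1) ≠ 0 := ne_of_gt (hrf _)
    have hZ'ne : Zfun r θ' ≠ 0 := ne_of_gt hZ'pos
    have hexpne : Real.exp (θ * ((z : ℝ) - 1)) ≠ 0 := exp_ne_zero _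
    have h3 : Real.exp (θ' * (z : ℝ)) * Zfun r θ
        = Real.exp (θ * ((z : ℝ) - 1)) * (Zfun r θ' * r z) := by
      apply mul_right_cancel₀ hrfne
      linear_combination h
    have hE : Real.exp (θ' * (z : ℝ))
        = Real.exp θ * Real.exp (β * z) * Real.exp (θ * ((z : ℝ) - 1)) := by
      rw [← Real.exp_add, ← Real.exp_add]
      congr 1
      rw [hβ]; ring
    rw [hE] at h3
    have h4 : Real.exp θ * Real.exp (β * z) * Zfun r θ = Zfun r θ' * r z := by
      apply mul_left_cancel₀ hexpne
      linear_combination h3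
    rw [hCdef, div_mul_eq_mul_div, eq_div_iff hZ'ne]
    linear_combination -h4
  have hCval : C = Real.exp (-β / 2) := by
    have h0 := hrel 0
    norm_num at h0
    rw [key 0, key 1] at h0
    push_cast at h0
    have h2 : C * C = Real.exp (-β / 2) * Real.exp (-β / 2) := by
      rw [← Real.exp_add]
      have hb : -β / 2 + -β / 2 = -β := by ring
      rw [hb, Real.exp_neg]
      have he : Real.exp β ≠ 0 := exp_ne_zero _
      rw [inv_eq_one_div, eq_div_iff he]
      calc C * C * Real.exp β = C * Real.exp (β * 0) * (C * Real.exp (β * 1)) := by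
            rw [mul_zero, Real.exp_zero]; ring
        _ = 1 := h0
    exact (mul_self_inj hCpos.le (Real.exp_pos _).le).mp h2
  have hr : ∀ z : ℤ, r z = Real.exp (-β / 2) * Real.exp (β * z) := by
    intro z; rw [key z, hCval]
  have hβne : β ≠ 0 := sub_ne_zero.mpr hne
  have hβpos : 0 < β := by
    rcases lt_trichotomy β 0 with hb | hb | hb
    · exfalso
      -- rfact on naturals is exp (β n^2 / 2)
      have hrfn : ∀ n : ℕ, rfact r (n : ℤ) = Real.exp (β * n ^ 2 / 2) := by
        intro n
        induction n with
        | zero => simp [rfact]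
        | succ k ih =>
          have h1 : ((k + 1 : ℕ) : ℤ).natAbs = k + 1 := by omega
          rw [rfact, h1, Finset.prod_range_succ]
          have h2 : (∏ y ∈ Finset.range k, r (y + 1)) = rfact r (k : ℤ) := by
            rw [rfact, Int.natAbs_natCast]
          rw [h2, ih, hr, ← Real.exp_add, ← Real.exp_add]
          congr 1
          push_cast
          ring
      have htend : Filter.Tendsto (fun n : ℕ =>
          Real.exp (θ * (n : ℤ)) / rfact r (n : ℤ)) Filter.atTop (nhds 0) := by
        have h1 := hZ.tendsto_cofinite_zero
        have h2 : Filter.Tendsto (fun n : ℕ => (n : ℤ)) Filter.cofinite Filter.cofinite :=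
          Function.Injective.tendsto_cofinite (fun a b h => by exact_mod_cast h)
        rw [Nat.cofinite_eq_atTop] at h2
        exact h1.comp h2
      have hlt := htend.eventually (gt_mem_nhds (show (0:ℝ) < 1 by norm_num))
      have hge : ∀ᶠ n : ℕ in Filter.atTop,
          (1:ℝ) ≤ Real.exp (θ * (n : ℤ)) / rfact r (n : ℤ) := by
        have ht : Filter.Tendsto (fun n : ℕ => θ + (-β / 2) * (n : ℝ)) Filter.atTop Filter.atTop := by
          apply Filter.tendsto_atTop_add_const_left
          exact Filter.Tendsto.const_mul_atTop (by linarith) tendsto_natCast_atTop_atTop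
        filter_upwards [ht.eventually_ge_atTop 0] with n hn
        rw [hrfn n, ← Real.exp_sub]
        have hexp : (0:ℝ) ≤ θ * (n : ℝ) - β * (n : ℝ) ^ 2 / 2 := by
          have : θ * (n : ℝ) - β * (n : ℝ) ^ 2 / 2 = (n : ℝ) * (θ + (-β / 2) * (n : ℝ)) := by ring
          rw [this]
          exact mul_nonneg (Nat.cast_nonneg n) hn
        calc (1:ℝ) = Real.exp 0 := (Real.exp_zero).symm
          _ ≤ _ := by
            apply Real.exp_le_exp.mpr
            push_cast
            try linarith
      obtain ⟨n, hn1, hn2⟩ := (hlt.and hge).exists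
      exact absurd hn2 (not_le.mpr hn1)
    · exact absurd hb hβne
    · exact hb
  exact ⟨hβpos, hr⟩
end

section
/- For the exponential rate function r(z) = e^{−β/2}·e^{βz} with β > 0, the mean of μ^{(θ)} shifts by exactly one when θ increases by β: ∑_{z∈ℤ} z·μ^{(θ+β)}(z) = 1 + ∑_{z∈ℤ} z·μ^{(θ)}(z), for every θ ∈ ℝ (both families being summable). -/
open Real

/-!
For the exponential rates, `r(z)! = exp (β z² / 2)` for every `z ∈ ℤ`, so `μ^{(θ)}` is a discrete
Gaussian with weights `exp (θ z - β z² / 2)`. Completing the square,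
`exp ((θ + β) z - β z² / 2) = exp (θ + β / 2) · exp (θ (z - 1) - β (z - 1)² / 2)`: raising `θ` by `β`
translates the weights by one up to a constant factor, which the normalisation absorbs. Hence
`μ^{(θ + β)}(z) = μ^{(θ)}(z - 1)`, and the mean of a translate is the mean plus the translation.
-/

theorem HasSum.int_mul_comp_sub_one {α : Type*} [Ring α] [TopologicalSpace α] [ContinuousAdd α]
    {p : ℤ → α} {a m : α} (hp : HasSum p a) (hm : HasSum (fun z : ℤ => (z : α) * p z) m) :
    HasSum (fun z : ℤ => (z : α) * p (z - 1)) (a + m) := by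
  rw [← (Equiv.addRight (1 : ℤ)).hasSum_iff]
  convert hp.add hm using 1
  ext w
  simp [add_mul, add_comm]

noncomputable def expRate (β : ℝ) (z : ℤ) : ℝ :=
  exp (-β / 2) * exp (β * z)

noncomputable def gaussianWeight (β θ : ℝ) (z : ℤ) : ℝ :=
  exp (θ * z - β * (z : ℝ) ^ 2 / 2)

theorem rfact_expRate (β : ℝ) (z : ℤ) : rfact (expRate β) z = exp (β * (z : ℝ) ^ 2 / 2) := by
  have hsum : ∀ n : ℕ, ∑ y ∈ Finset.range n, (β * ((y : ℝ) + 1) - β / 2) = β * (n : ℝ) ^ 2 / 2 := by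
    intro n
    induction n with
    | zero => simp
    | succ k ih => rw [Finset.sum_range_succ, ih]; push_cast; ring
  have hfactor : ∀ y : ℕ, expRate β (y + 1) = exp (β * ((y : ℝ) + 1) - β / 2) := by
    intro y
    rw [expRate, ← exp_add]
    push_cast
    ring_nf
  simp only [rfact, hfactor, ← exp_sum, hsum, Nat.cast_natAbs, Int.cast_abs, sq_abs]

theorem exp_div_rfact_expRate (β θ : ℝ) (z : ℤ) :
    exp (θ * z) / rfact (expRate β) z = gaussianWeight β θ z := by
  rw [rfact_expRate, gaussianWeight, exp_sub]

theorem gaussianWeight_pos (β θ : ℝ) (z : ℤ) : 0 < gaussianWeight β θ z :=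
  exp_pos _

theorem gaussianWeight_add_self (β θ : ℝ) (z : ℤ) :
    gaussianWeight β (θ + β) z = exp (θ + β / 2) * gaussianWeight β θ (z - 1) := by
  rw [gaussianWeight, gaussianWeight, ← exp_add]
  push_cast
  ring_nf

theorem summable_abs_pow_mul_gaussianWeight {β : ℝ} (hβ : 0 < β) (θ : ℝ) (k : ℕ) :
    Summable (fun z : ℤ => |(z : ℝ)| ^ k * gaussianWeight β θ z) := by
  -- Dominate by the Jacobi theta bound with `π T = β / 2` and `2 π S = |θ|`.
  refine (summable_pow_mul_jacobiTheta₂_term_bound (|θ| / (2 * π))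
    (T := β / (2 * π)) (by positivity) k).of_nonneg_of_le
    (fun z => mul_nonneg (by positivity) (gaussianWeight_pos β θ z).le) fun z => ?_
  rw [Int.cast_abs]
  refine mul_le_mul_of_nonneg_left (exp_le_exp.2 ?_) (pow_nonneg (abs_nonneg _) k)
  have hθz : θ * z ≤ |θ| * |(z : ℝ)| := by
    rw [← abs_mul]
    exact le_abs_self _
  calc θ * z - β * (z : ℝ) ^ 2 / 2 ≤ |θ| * |(z : ℝ)| - β * (z : ℝ) ^ 2 / 2 := by linarith
    _ = -π * (β / (2 * π) * (z : ℝ) ^ 2 - 2 * (|θ| / (2 * π)) * |(z : ℝ)|) := by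
      field_simp
      ring

theorem summable_gaussianWeight {β : ℝ} (hβ : 0 < β) (θ : ℝ) : Summable (gaussianWeight β θ) := by
  simpa using summable_abs_pow_mul_gaussianWeight hβ θ 0

theorem summable_intCast_mul_gaussianWeight {β : ℝ} (hβ : 0 < β) (θ : ℝ) :
    Summable (fun z : ℤ => (z : ℝ) * gaussianWeight β θ z) :=
  (summable_abs_pow_mul_gaussianWeight hβ θ 1).of_norm_bounded fun z => by
    rw [norm_mul, Real.norm_eq_abs, Real.norm_of_nonneg (gaussianWeight_pos β θ z).le, pow_one]

theorem Zfun_expRate (β θ : ℝ) : Zfun (expRate β) θ = ∑' z : ℤ, gaussianWeight β θ z :=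
  tsum_congr (exp_div_rfact_expRate β θ)

theorem mu_expRate (β θ : ℝ) (z : ℤ) :
    mu (expRate β) θ z = gaussianWeight β θ z / ∑' n : ℤ, gaussianWeight β θ n := by
  rw [mu, ← exp_div_rfact_expRate β θ z, Zfun_expRate, div_mul_eq_div_div_swap]

theorem hasSum_mu_expRate {β : ℝ} (hβ : 0 < β) (θ : ℝ) : HasSum (mu (expRate β) θ) 1 := by
  have hZ : 0 < ∑' n : ℤ, gaussianWeight β θ n :=
    (summable_gaussianWeight hβ θ).tsum_pos (fun z => (gaussianWeight_pos β θ z).le) 0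
      (gaussianWeight_pos β θ 0)
  simpa only [← mu_expRate, div_self hZ.ne'] using
    (summable_gaussianWeight hβ θ).hasSum.div_const (∑' n : ℤ, gaussianWeight β θ n)

theorem summable_intCast_mul_mu_expRate {β : ℝ} (hβ : 0 < β) (θ : ℝ) :
    Summable (fun z : ℤ => (z : ℝ) * mu (expRate β) θ z) := by
  simpa only [mu_expRate, mul_div_assoc] using
    (summable_intCast_mul_gaussianWeight hβ θ).div_const (∑' n : ℤ, gaussianWeight β θ n)

theorem mu_expRate_add_self (β θ : ℝ) (z : ℤ) :
    mu (expRate β) (θ + β) z = mu (expRate β) θ (z - 1) := by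
  have hZ : ∑' n : ℤ, gaussianWeight β (θ + β) n
      = exp (θ + β / 2) * ∑' n : ℤ, gaussianWeight β θ n := by
    simp only [gaussianWeight_add_self, tsum_mul_left]
    exact congrArg _ ((Equiv.subRight (1 : ℤ)).tsum_eq (gaussianWeight β θ))
  rw [mu_expRate, mu_expRate, hZ, gaussianWeight_add_self, mul_div_mul_left _ _ (exp_ne_zero _)]

theorem mean_shift (β : ℝ) (hβ : 0 < β) (r : ℤ → ℝ)
    (hr : ∀ z : ℤ, r z = Real.exp (-β / 2) * Real.exp (β * z)) (θ : ℝ) :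
    Summable (fun z : ℤ => (z : ℝ) * mu r (θ + β) z) ∧
    Summable (fun z : ℤ => (z : ℝ) * mu r θ z) ∧
    (∑' z : ℤ, (z : ℝ) * mu r (θ + β) z) = 1 + ∑' z : ℤ, (z : ℝ) * mu r θ z := by
  obtain rfl : r = expRate β := funext hr
  have hmean := (summable_intCast_mul_mu_expRate hβ θ).hasSum
  have hshifted : HasSum (fun z : ℤ => (z : ℝ) * mu (expRate β) (θ + β) z)
      (1 + ∑' z : ℤ, (z : ℝ) * mu (expRate β) θ z) := by
    simpa only [mu_expRate_add_self] using (hasSum_mu_expRate hβ θ).int_mul_comp_sub_one hmean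
  exact ⟨hshifted.summable, hmean.summable, hshifted.tsum_eq⟩
end

section
/- (Corollary 5.2, stationarity of constant-parameter product measure.) Let θ ∈ ℝ with Z(θ) convergent, let μ^{(θ)} denote the product probability measure on ℤ^ℤ all of whose marginals equal the single-site measure μ^{(θ)}, and let φ : ℤ^ℤ → ℝ be bounded and measurable, depending only on the coordinates ω_l, …, ω_r for some integers l ≤ r. Then ∑_{i=l−1}^{r} ∫ (r(ω_i)+r(−ω_{i+1}))·(φ(ω^{(i,i+1)}) − φ(ω)) dμ^{(θ)}(ω) = 0. -/
open Real MeasureTheory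

/-- `ω^{(i,i+1)}`: a brick is laid on the column over `(i, i+1)`; coordinate `i`
decreases by one and coordinate `i+1` increases by one. -/
def brickCfg (ω : ℤ → ℤ) (i : ℤ) : ℤ → ℤ :=
  fun j => if j = i then ω i - 1 else if j = i + 1 then ω (i + 1) + 1 else ω j

/-- `ω^{(i,+)}`: only coordinate `i` is changed, to `ω i + 1`. -/
def upCfg (ω : ℤ → ℤ) (i : ℤ) : ℤ → ℤ := Function.update ω i (ω i + 1)

/-- `ω^{(i,-)}`: only coordinate `i` is changed, to `ω i - 1`. -/
def downCfg (ω : ℤ → ℤ) (i : ℤ) : ℤ → ℤ := Function.update ω i (ω i - 1)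

/-- `IsProductMeasure r η P` means: `P` is the product probability measure on `ℤ^ℤ`
whose `i`-th marginal is the single-site measure `μ^{(η i)}`, characterized by its
values on cylinder sets. -/
def IsProductMeasure (r : ℤ → ℝ) (η : ℤ → ℝ) (P : Measure (ℤ → ℤ)) : Prop :=
  IsProbabilityMeasure P ∧
    ∀ (s : Finset ℤ) (c : ℤ → ℤ),
      P {ω : ℤ → ℤ | ∀ i ∈ s, ω i = c i} = ∏ i ∈ s, ENNReal.ofReal (mu r (η i) (c i))


/-!
The relation `r(z) r(1 - z) = 1` gives `r(z) r(z-1)! = r(z)!`, hence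
`r(z) μ(z) = e^θ μ(z - 1)` and `r(-z) μ(z) = e^{-θ} μ(z + 1)`. Under the product measure this
turns the jump rates into changes of variables at a single site:
`E[r(ω_i) f(ω^{(i,-)})] = e^θ E[f]` and `E[r(-ω_i) f(ω^{(i,+)})] = e^{-θ} E[f]`.
Since `ω^{(i,i+1)} = (ω^{(i,-)})^{(i+1,+)} = (ω^{(i+1,+)})^{(i,-)}`, the `i`-th summand equals
`G(i+1) - G(i)` with `G(j) = e^θ E[φ(ω^{(j,+)})] - e^{-θ} E[φ(ω^{(j,-)})]`, so the sum telescopes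
to `G(b+1) - G(a-1)`, which vanishes because `φ` ignores the coordinates `a - 1` and `b + 1`.
-/

open Function

theorem Int.sum_Icc_sub {M : Type*} [AddCommGroup M] (g : ℤ → M) {m n : ℤ} (h : m ≤ n + 1) :
    ∑ i ∈ Finset.Icc m n, (g (i + 1) - g i) = g (n + 1) - g m := by
  rw [← Finset.Ico_add_one_right_eq_Icc]
  generalize n + 1 = k at h ⊢
  induction k, h using Int.leInduction with
  | base => simp
  | succ k hmk ih =>
    rw [← Finset.insert_Ico_right_eq_Ico_add_one hmk, Finset.sum_insert (by simp), ih]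
    abel

lemma DependsOn.apply_update_of_notMem {ι β : Type*} {α : ι → Type*} [DecidableEq ι]
    {f : (Π i, α i) → β} {s : Set ι} (hf : DependsOn f s) {i : ι} (hi : i ∉ s)
    (x : Π i, α i) (v : α i) : f (Function.update x i v) = f x :=
  hf fun _ hj => update_of_ne (ne_of_mem_of_not_mem hj hi) _ _

section PointCylinder

variable {ι α : Type*}

def pointCylinder (s : Finset ι) (c : ι → α) : Set (ι → α) := {ω | ∀ j ∈ s, ω j = c j}

@[simp]
lemma mem_pointCylinder {s : Finset ι} {c ω : ι → α} :
    ω ∈ pointCylinder s c ↔ ∀ j ∈ s, ω j = c j := Iff.rfl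

lemma pointCylinder_empty (c : ι → α) : pointCylinder ∅ c = Set.univ := by
  ext; simp

lemma isPiSystem_pointCylinders :
    IsPiSystem {S : Set (ι → α) | ∃ s c, S = pointCylinder s c} := by
  classical
  rintro _ ⟨s, c, rfl⟩ _ ⟨t, d, rfl⟩ ⟨ω₀, hs, ht⟩
  refine ⟨s ∪ t, ω₀, Set.ext fun ω => ?_⟩
  simp only [Set.mem_inter_iff, mem_pointCylinder, Finset.mem_union] at hs ht ⊢
  constructor
  · rintro ⟨hωs, hωt⟩ j (hj | hj)
    · rw [hωs j hj, hs j hj]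
    · rw [hωt j hj, ht j hj]
  · intro h
    exact ⟨fun j hj => (h j (.inl hj)).trans (hs j hj), fun j hj => (h j (.inr hj)).trans (ht j hj)⟩

lemma preimage_update_pointCylinder [DecidableEq ι] (σ : α ≃ α) {s : Finset ι} {i : ι} (hi : i ∈ s)
    (c : ι → α) :
    (fun ω => update ω i (σ (ω i))) ⁻¹' pointCylinder s c =
      pointCylinder s (update c i (σ.symm (c i))) := by
  ext ω
  simp only [Set.mem_preimage, mem_pointCylinder]
  refine ⟨fun h j hj => ?_, fun h j hj => ?_⟩ <;> rcases eq_or_ne j i with rfl | hji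
  · simpa [Equiv.eq_symm_apply] using h j hj
  · simpa [update_of_ne hji] using h j hj
  · have := h j hj
    rw [update_self] at this ⊢
    rw [this, Equiv.apply_symm_apply]
  · simpa [update_of_ne hji] using h j hj

variable [MeasurableSpace α] [MeasurableSingletonClass α]

lemma measurableSet_pointCylinder (s : Finset ι) (c : ι → α) :
    MeasurableSet (pointCylinder s c) := by
  have : pointCylinder s c = ⋂ j ∈ s, (fun ω : ι → α => ω j) ⁻¹' {c j} := by ext; simp
  rw [this]
  exact .biInter s.countable_toSet fun j _ => measurable_pi_apply j (measurableSet_singleton _)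

lemma generateFrom_pointCylinders [Countable α] :
    MeasurableSpace.generateFrom {S : Set (ι → α) | ∃ s c, S = pointCylinder s c} =
      MeasurableSpace.pi := by
  refine le_antisymm (MeasurableSpace.generateFrom_le ?_) (iSup_le fun j => ?_)
  · rintro _ ⟨s, c, rfl⟩
    exact measurableSet_pointCylinder s c
  · rintro _ ⟨T, -, rfl⟩
    have : (fun ω : ι → α => ω j) ⁻¹' T = ⋃ z ∈ T, pointCylinder {j} fun _ => z := by
      ext; simp
    rw [this]
    exact .biUnion T.to_countable fun z _ =>
      MeasurableSpace.measurableSet_generateFrom ⟨{j}, fun _ => z, rfl⟩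

lemma measure_pointCylinder_eq_tsum [DecidableEq ι] [Countable α] (ν : Measure (ι → α))
    {s : Finset ι} {i : ι} (hi : i ∉ s) (c : ι → α) :
    ν (pointCylinder s c) = ∑' z, ν (pointCylinder (insert i s) (update c i z)) := by
  have hunion : pointCylinder s c = ⋃ z, pointCylinder (insert i s) (update c i z) := by
    ext ω
    simp only [mem_pointCylinder, Set.mem_iUnion, Finset.forall_mem_insert, update_self]
    refine ⟨fun h => ⟨ω i, rfl, fun j hj => ?_⟩, fun ⟨z, _, h⟩ j hj => ?_⟩
    · rw [update_of_ne (ne_of_mem_of_not_mem hj hi), h j hj]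
    · rw [h j hj, update_of_ne (ne_of_mem_of_not_mem hj hi)]
  rw [hunion, measure_iUnion _ fun z => measurableSet_pointCylinder _ _]
  intro z w hzw
  refine Set.disjoint_left.2 fun ω hz hw => hzw ?_
  simpa using (hz i (Finset.mem_insert_self i s)).symm.trans (hw i (Finset.mem_insert_self i s))

end PointCylinder

section SingleSite

variable {r : ℤ → ℝ}

lemma rfact_eq_mul_rfact_sub_one (hrel : ∀ z, r z * r (-z + 1) = 1) (z : ℤ) :
    rfact r z = r z * rfact r (z - 1) := by
  unfold rfact
  rcases le_or_gt 1 z with h | h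
  · rw [show z.natAbs = (z - 1).natAbs + 1 by omega, Finset.prod_range_succ, mul_comm]
    congr
    omega
  · rw [show (z - 1).natAbs = z.natAbs + 1 by omega, Finset.prod_range_succ,
      show ((z.natAbs : ℤ) + 1) = -z + 1 by omega, ← mul_assoc, mul_comm (r z), mul_assoc, hrel,
      mul_one]

lemma r_mul_mu (hrel : ∀ z, r z * r (-z + 1) = 1) (θ : ℝ) (z : ℤ) :
    r z * mu r θ z = exp θ * mu r θ (z - 1) := by
  have hexp : exp (θ * z) = exp θ * exp (θ * ↑(z - 1)) := by
    rw [← exp_add]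
    push_cast
    ring_nf
  rw [mu, mu, rfact_eq_mul_rfact_sub_one hrel, mul_left_comm (Zfun r θ), ← mul_div_assoc,
    mul_div_mul_left _ _ (left_ne_zero_of_mul_eq_one (hrel z)), hexp, mul_div_assoc]

lemma r_neg_mul_mu (hrel : ∀ z, r z * r (-z + 1) = 1) (θ : ℝ) (z : ℤ) :
    r (-z) * mu r θ z = exp (-θ) * mu r θ (z + 1) := by
  have hinv : r (z + 1) * r (-z) = 1 := by simpa using hrel (z + 1)
  have hstep := r_mul_mu hrel θ (z + 1)
  rw [add_sub_cancel_right] at hstep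
  calc r (-z) * mu r θ z = exp (-θ) * (exp θ * mu r θ z) * r (-z) := by
        rw [← mul_assoc, ← exp_add, neg_add_cancel, exp_zero, one_mul, mul_comm]
    _ = exp (-θ) * mu r θ (z + 1) * (r (z + 1) * r (-z)) := by rw [← hstep]; ring
    _ = exp (-θ) * mu r θ (z + 1) := by rw [hinv, mul_one]

end SingleSite

namespace IsProductMeasure

variable {r η : ℤ → ℝ} {P : Measure (ℤ → ℤ)}

lemma measure_pointCylinder_update (hP : IsProductMeasure r η P) {s : Finset ℤ} {i : ℤ}
    (hi : i ∈ s) (c : ℤ → ℤ) (z : ℤ) :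
    P (pointCylinder s (update c i z)) =
      ENNReal.ofReal (mu r (η i) z) * ∏ j ∈ s.erase i, ENNReal.ofReal (mu r (η j) (c j)) := by
  rw [pointCylinder, hP.2, ← Finset.mul_prod_erase s _ hi, update_self]
  congr 1
  exact Finset.prod_congr rfl fun j hj => by rw [update_of_ne (Finset.ne_of_mem_erase hj)]

theorem map_withDensity_update (hP : IsProductMeasure r η P) (i : ℤ) (σ : ℤ ≃ ℤ) {ρ : ℤ → ℝ}
    {K : ℝ} (hρ : ∀ z, 0 ≤ ρ z) (hK : 0 ≤ K)
    (hσ : ∀ z, ρ z * mu r (η i) z = K * mu r (η i) (σ z)) :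
    (P.withDensity fun ω => ENNReal.ofReal (ρ (ω i))).map (fun ω => update ω i (σ (ω i))) =
      ENNReal.ofReal K • P := by
  have : IsProbabilityMeasure P := hP.1
  have hT : Measurable fun ω : ℤ → ℤ => update ω i (σ (ω i)) := by fun_prop
  have hmem : ∀ s c, i ∈ s →
      (P.withDensity fun ω => ENNReal.ofReal (ρ (ω i))).map (fun ω => update ω i (σ (ω i)))
        (pointCylinder s c) = ENNReal.ofReal K * P (pointCylinder s c) := by
    intro s c hi
    set z := σ.symm (c i)
    have hconst : ∀ ω ∈ pointCylinder s (update c i z),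
        ENNReal.ofReal (ρ (ω i)) = ENNReal.ofReal (ρ z) := fun ω hω => by
      rw [hω i hi, update_self]
    have hmeas := measurableSet_pointCylinder s (update c i z)
    calc _ = ENNReal.ofReal (ρ z) * P (pointCylinder s (update c i z)) := by
          rw [Measure.map_apply hT (measurableSet_pointCylinder _ _),
            preimage_update_pointCylinder σ hi, withDensity_apply _ hmeas,
            setLIntegral_congr_fun hmeas hconst, setLIntegral_const]
      _ = ENNReal.ofReal (K * mu r (η i) (c i)) *
            ∏ j ∈ s.erase i, ENNReal.ofReal (mu r (η j) (c j)) := by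
          rw [hP.measure_pointCylinder_update hi, ← mul_assoc, ← ENNReal.ofReal_mul (hρ _), hσ,
            Equiv.apply_symm_apply]
      _ = ENNReal.ofReal K * P (pointCylinder s c) := by
          rw [← update_eq_self i c, hP.measure_pointCylinder_update hi, update_eq_self,
            ENNReal.ofReal_mul hK, mul_assoc]
  have hcyl : ∀ s c,
      (P.withDensity fun ω => ENNReal.ofReal (ρ (ω i))).map (fun ω => update ω i (σ (ω i)))
        (pointCylinder s c) = (ENNReal.ofReal K • P) (pointCylinder s c) := by
    intro s c
    rw [Measure.smul_apply, smul_eq_mul]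
    by_cases hi : i ∈ s
    · exact hmem s c hi
    · rw [measure_pointCylinder_eq_tsum _ hi, measure_pointCylinder_eq_tsum _ hi,
        ← ENNReal.tsum_mul_left]
      exact tsum_congr fun z => hmem _ _ (Finset.mem_insert_self i s)
  have : IsFiniteMeasure (ENNReal.ofReal K • P) := isFiniteMeasureSMulNNReal (r := K.toNNReal)
  refine (ext_of_generate_finite _ generateFrom_pointCylinders.symm isPiSystem_pointCylinders
    ?_ ?_).symm
  · rintro _ ⟨s, c, rfl⟩
    exact (hcyl s c).symm
  · rw [← pointCylinder_empty (0 : ℤ → ℤ)]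
    exact (hcyl _ _).symm

theorem integrable_mul_comp_update (hP : IsProductMeasure r η P) (i : ℤ) (σ : ℤ ≃ ℤ)
    {ρ : ℤ → ℝ} {K : ℝ} (hρ : ∀ z, 0 ≤ ρ z) (hK : 0 ≤ K)
    (hσ : ∀ z, ρ z * mu r (η i) z = K * mu r (η i) (σ z)) {f : (ℤ → ℤ) → ℝ}
    (hf : Integrable f P) :
    Integrable (fun ω => ρ (ω i) * f (update ω i (σ (ω i)))) P := by
  have hT : Measurable fun ω : ℤ → ℤ => update ω i (σ (ω i)) := by fun_prop
  have hfT : Integrable f ((P.withDensity fun ω => ENNReal.ofReal (ρ (ω i))).map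
      fun ω => update ω i (σ (ω i))) := by
    rw [hP.map_withDensity_update i σ hρ hK hσ]
    exact hf.smul_measure ENNReal.ofReal_ne_top
  have := (integrable_withDensity_iff_integrable_smul' (by fun_prop)
    (ae_of_all _ fun _ => ENNReal.ofReal_lt_top)).1
    ((integrable_map_measure hfT.1 hT.aemeasurable).1 hfT)
  simpa [ENNReal.toReal_ofReal (hρ _)] using this

theorem integral_mul_comp_update (hP : IsProductMeasure r η P) (i : ℤ) (σ : ℤ ≃ ℤ)
    {ρ : ℤ → ℝ} {K : ℝ} (hρ : ∀ z, 0 ≤ ρ z) (hK : 0 ≤ K)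
    (hσ : ∀ z, ρ z * mu r (η i) z = K * mu r (η i) (σ z)) {f : (ℤ → ℤ) → ℝ}
    (hf : AEStronglyMeasurable f P) :
    ∫ ω, ρ (ω i) * f (update ω i (σ (ω i))) ∂P = K * ∫ ω, f ω ∂P := by
  have hT : Measurable fun ω : ℤ → ℤ => update ω i (σ (ω i)) := by fun_prop
  have hmap := hP.map_withDensity_update i σ hρ hK hσ
  have hfT : AEStronglyMeasurable f ((P.withDensity fun ω => ENNReal.ofReal (ρ (ω i))).map
      fun ω => update ω i (σ (ω i))) := by
    rw [hmap]
    exact hf.smul_measure _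
  calc ∫ ω, ρ (ω i) * f (update ω i (σ (ω i))) ∂P
      = ∫ ω, f (update ω i (σ (ω i))) ∂P.withDensity fun ω => ENNReal.ofReal (ρ (ω i)) := by
        rw [integral_withDensity_eq_integral_toReal_smul (by fun_prop)
          (ae_of_all _ fun _ => ENNReal.ofReal_lt_top)]
        simp [ENNReal.toReal_ofReal (hρ _)]
    _ = ∫ ω, f ω ∂(P.withDensity fun ω => ENNReal.ofReal (ρ (ω i))).map
          fun ω => update ω i (σ (ω i)) :=
        (integral_map hT.aemeasurable hfT).symm
    _ = K * ∫ ω, f ω ∂P := by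
        rw [hmap, integral_smul_measure, ENNReal.toReal_ofReal hK, smul_eq_mul]

end IsProductMeasure

section Configurations

variable (ω : ℤ → ℤ) (i : ℤ)

lemma brickCfg_eq_upCfg_downCfg : brickCfg ω i = upCfg (downCfg ω i) (i + 1) := by
  funext j
  simp only [brickCfg, upCfg, downCfg, update_apply]
  split_ifs <;> omega

lemma brickCfg_eq_downCfg_upCfg : brickCfg ω i = downCfg (upCfg ω (i + 1)) i := by
  funext j
  simp only [brickCfg, upCfg, downCfg, update_apply]
  split_ifs <;> omega

lemma upCfg_downCfg : upCfg (downCfg ω i) i = ω := by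
  simp [upCfg, downCfg]

lemma downCfg_upCfg : downCfg (upCfg ω i) i = ω := by
  simp [upCfg, downCfg]

lemma measurable_upCfg : Measurable (upCfg · i) := by
  unfold upCfg
  fun_prop

lemma measurable_downCfg : Measurable (downCfg · i) := by
  unfold downCfg
  fun_prop

end Configurations

namespace IsProductMeasure

variable {r η : ℤ → ℝ} {P : Measure (ℤ → ℤ)}

lemma integrable_r_mul_comp_downCfg (hP : IsProductMeasure r η P) (hr : ∀ z, 0 ≤ r z)
    (hrel : ∀ z, r z * r (-z + 1) = 1) (i : ℤ) {f : (ℤ → ℤ) → ℝ} (hf : Integrable f P) :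
    Integrable (fun ω => r (ω i) * f (downCfg ω i)) P :=
  hP.integrable_mul_comp_update i (Equiv.subRight 1) hr (exp_pos _).le (r_mul_mu hrel _) hf

lemma integral_r_mul_comp_downCfg (hP : IsProductMeasure r η P) (hr : ∀ z, 0 ≤ r z)
    (hrel : ∀ z, r z * r (-z + 1) = 1) (i : ℤ) {f : (ℤ → ℤ) → ℝ}
    (hf : AEStronglyMeasurable f P) :
    ∫ ω, r (ω i) * f (downCfg ω i) ∂P = exp (η i) * ∫ ω, f ω ∂P :=
  hP.integral_mul_comp_update i (Equiv.subRight 1) hr (exp_pos _).le (r_mul_mu hrel _) hf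

lemma integrable_r_neg_mul_comp_upCfg (hP : IsProductMeasure r η P) (hr : ∀ z, 0 ≤ r z)
    (hrel : ∀ z, r z * r (-z + 1) = 1) (i : ℤ) {f : (ℤ → ℤ) → ℝ} (hf : Integrable f P) :
    Integrable (fun ω => r (-ω i) * f (upCfg ω i)) P :=
  hP.integrable_mul_comp_update i (Equiv.addRight 1) (fun _ => hr _) (exp_pos _).le
    (r_neg_mul_mu hrel _) hf

lemma integral_r_neg_mul_comp_upCfg (hP : IsProductMeasure r η P) (hr : ∀ z, 0 ≤ r z)
    (hrel : ∀ z, r z * r (-z + 1) = 1) (i : ℤ) {f : (ℤ → ℤ) → ℝ}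
    (hf : AEStronglyMeasurable f P) :
    ∫ ω, r (-ω i) * f (upCfg ω i) ∂P = exp (-η i) * ∫ ω, f ω ∂P :=
  hP.integral_mul_comp_update i (Equiv.addRight 1) (fun _ => hr _) (exp_pos _).le
    (r_neg_mul_mu hrel _) hf

theorem integral_rate_mul_brickCfg_sub (hP : IsProductMeasure r η P) (hr : ∀ z, 0 ≤ r z)
    (hrel : ∀ z, r z * r (-z + 1) = 1) {φ : (ℤ → ℤ) → ℝ} (hφ : Measurable φ)
    (hbdd : ∃ M, ∀ ω, |φ ω| ≤ M) (i : ℤ) :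
    ∫ ω, (r (ω i) + r (-ω (i + 1))) * (φ (brickCfg ω i) - φ ω) ∂P =
      exp (η i) * (∫ ω, φ (upCfg ω (i + 1)) ∂P - ∫ ω, φ (upCfg ω i) ∂P) +
        exp (-η (i + 1)) * (∫ ω, φ (downCfg ω i) ∂P - ∫ ω, φ (downCfg ω (i + 1)) ∂P) := by
  have : IsProbabilityMeasure P := hP.1
  obtain ⟨M, hM⟩ := hbdd
  have hint : ∀ g : (ℤ → ℤ) → (ℤ → ℤ), Measurable g → Integrable (fun ω => φ (g ω)) P :=
    fun g hg => .of_bound (hφ.comp hg).aestronglyMeasurable M (ae_of_all _ fun ω => hM (g ω))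
  set F := fun ω => φ (upCfg ω (i + 1)) - φ (upCfg ω i)
  set F' := fun ω => φ (downCfg ω i) - φ (downCfg ω (i + 1))
  have hF : Integrable F P := (hint _ (measurable_upCfg _)).sub (hint _ (measurable_upCfg _))
  have hF' : Integrable F' P := (hint _ (measurable_downCfg _)).sub (hint _ (measurable_downCfg _))
  calc ∫ ω, (r (ω i) + r (-ω (i + 1))) * (φ (brickCfg ω i) - φ ω) ∂P
      = ∫ ω, r (ω i) * F (downCfg ω i) + r (-ω (i + 1)) * F' (upCfg ω (i + 1)) ∂P := by
        congr 1
        funext ω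
        simp only [F, F', upCfg_downCfg, downCfg_upCfg, ← brickCfg_eq_upCfg_downCfg,
          ← brickCfg_eq_downCfg_upCfg]
        ring
    _ = exp (η i) * ∫ ω, F ω ∂P + exp (-η (i + 1)) * ∫ ω, F' ω ∂P := by
        rw [integral_add (hP.integrable_r_mul_comp_downCfg hr hrel i hF)
          (hP.integrable_r_neg_mul_comp_upCfg hr hrel (i + 1) hF'),
          hP.integral_r_mul_comp_downCfg hr hrel i hF.1,
          hP.integral_r_neg_mul_comp_upCfg hr hrel (i + 1) hF'.1]
    _ = _ := by
        rw [integral_sub (hint _ (measurable_upCfg _)) (hint _ (measurable_upCfg _)),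
          integral_sub (hint _ (measurable_downCfg _)) (hint _ (measurable_downCfg _))]

end IsProductMeasure

theorem stationarity_constant_parameter_general (r : ℤ → ℝ) (hpos : ∀ z : ℤ, 0 < r z)
    (hrel : ∀ z : ℤ, r z * r (-z + 1) = 1)
    (θ : ℝ)
    (P : Measure (ℤ → ℤ)) (hP : IsProductMeasure r (fun _ => θ) P)
    (φ : (ℤ → ℤ) → ℝ) (hmeas : Measurable φ) (hbdd : ∃ M : ℝ, ∀ ω, |φ ω| ≤ M)
    (a b : ℤ) (hab : a ≤ b)
    (hdep : ∀ ω ω' : ℤ → ℤ, (∀ i : ℤ, a ≤ i → i ≤ b → ω i = ω' i) → φ ω = φ ω') :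
    (∑ i ∈ Finset.Icc (a - 1) b,
        ∫ ω, (r (ω i) + r (-(ω (i + 1)))) * (φ (brickCfg ω i) - φ ω) ∂P) = 0 := by
  have hφ : DependsOn φ (Set.Icc a b) := fun ω ω' h => hdep ω ω' fun i h₁ h₂ => h i ⟨h₁, h₂⟩
  set G : ℤ → ℝ := fun j => exp θ * ∫ ω, φ (upCfg ω j) ∂P - exp (-θ) * ∫ ω, φ (downCfg ω j) ∂P
  have hsite : ∀ i, ∫ ω, (r (ω i) + r (-(ω (i + 1)))) * (φ (brickCfg ω i) - φ ω) ∂P =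
      G (i + 1) - G i := fun i => by
    rw [hP.integral_rate_mul_brickCfg_sub (fun z => (hpos z).le) hrel hmeas hbdd i]
    ring
  have hG : ∀ j ∉ Set.Icc a b, G j = (exp θ - exp (-θ)) * ∫ ω, φ ω ∂P := fun j hj => by
    simp only [G, upCfg, downCfg, hφ.apply_update_of_notMem hj]
    ring
  rw [Finset.sum_congr rfl fun i _ => hsite i, Int.sum_Icc_sub G (by omega),
    hG _ (by simp), hG _ (by simp), sub_self]

theorem stationarity_constant_parameter (r : ℤ → ℝ) (hpos : ∀ z : ℤ, 0 < r z)
    (hrel : ∀ z : ℤ, r z * r (-z + 1) = 1)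
    (θ : ℝ) (hZ : Summable (fun z : ℤ => Real.exp (θ * z) / rfact r z))
    (P : Measure (ℤ → ℤ)) (hP : IsProductMeasure r (fun _ => θ) P)
    (φ : (ℤ → ℤ) → ℝ) (hmeas : Measurable φ) (hbdd : ∃ M : ℝ, ∀ ω, |φ ω| ≤ M)
    (a b : ℤ) (hab : a ≤ b)
    (hdep : ∀ ω ω' : ℤ → ℤ, (∀ i : ℤ, a ≤ i → i ≤ b → ω i = ω' i) → φ ω = φ ω') :
    (∑ i ∈ Finset.Icc (a - 1) b,
        ∫ ω, (r (ω i) + r (-(ω (i + 1)))) * (φ (brickCfg ω i) - φ ω) ∂P) = 0 :=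
  stationarity_constant_parameter_general r hpos hrel θ P hP φ hmeas hbdd a b hab hdep
end

section
/- (Theorem 4.1, exponential case.) Let r(z) = e^{−β/2}·e^{βz} with β > 0, let θ_j ∈ ℝ for j ∈ ℤ, let μ^{(θ̲)} be the product probability measure on ℤ^ℤ with j-th marginal μ^{(θ_j)}, and let φ : ℤ^ℤ → ℝ be bounded and measurable, depending only on the coordinates ω_l, …, ω_r for some integers l ≤ r. Then ∑_{i=l−1}^{r} ∫ (r(ω_i)+r(−ω_{i+1}))·(φ(ω^{(i,i+1)}) − φ(ω)) dμ^{(θ̲)}(ω) = ∑_{i=l−1}^{r−1} (e^{θ_i} − e^{θ_{i+1}})·( ∫ φ dμ^{(θ̲^{(i+1,+)})} − ∫ φ dμ^{(θ̲)} ) + ∑_{i=l+1}^{r+1} (e^{−θ_i} − e^{−θ_{i−1}})·( ∫ φ dμ^{(θ̲^{(i−1,−)})} − ∫ φ dμ^{(θ̲)} ), where θ̲^{(i,±)} is obtained from θ̲ by replacing θ_i with θ_i ± β. -/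
/-!
For exponential rates `r(z)! = e^{βz²/2}`, so tilting a site by `βk` translates its law by `k`,
`μ^{(θ+βk)}(z) = μ^{(θ)}(z-k)`, while `r(z) μ^{(θ)}(z) = e^{θ} μ^{(θ+β)}(z)` and
`r(-z) μ^{(θ)}(z) = e^{-θ} μ^{(θ-β)}(z)`. Hence the density `r(ω_i)` (resp. `r(-ω_{i+1})`) turns
`μ^{(θ̲)}` into `e^{θ_i}` (resp. `e^{-θ_{i+1}}`) times the measure tilted by `+β` at `i`
(resp. `-β` at `i+1`), and under that measure the brick move `ω ↦ ω^{(i,i+1)}`, a translation,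
pushes it forward to the measure tilted at `i+1` (resp. at `i`). Each summand of the left side is
thereby a difference of expectations of `φ` under single-site tilts, and summation by parts gives
the right side: its boundary terms vanish because `φ` does not see tilts outside `[l, r]`.
Product measures are identified through their values on cylinder sets.
-/

open Real MeasureTheory

lemma Finset.restrict_surjective {ι α : Type*} [Nonempty α] (s : Finset ι) :
    Function.Surjective (s.restrict : (ι → α) → (s → α)) := fun c =>
  ⟨Function.extend Subtype.val c fun _ => Classical.arbitrary α,
    funext fun i => Subtype.val_injective.extend_apply _ _ i⟩

lemma preimage_restrict_singleton {ι α : Type*} (s : Finset ι) (ω₀ : ι → α) :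
    (s.restrict : (ι → α) → (s → α)) ⁻¹' {s.restrict ω₀} = {ω | ∀ i ∈ s, ω i = ω₀ i} := by
  ext ω
  simp [funext_iff]

section Cylinder

variable {ι α : Type*} [MeasurableSpace α] [MeasurableSingletonClass α]

lemma measurableSet_cylinder (s : Finset ι) (ω₀ : ι → α) :
    MeasurableSet {ω : ι → α | ∀ i ∈ s, ω i = ω₀ i} := by
  rw [← preimage_restrict_singleton]
  exact Finset.measurable_restrict s (measurableSet_singleton _)

lemma map_restrict_eq_of_cylinder [Countable α] [Nonempty α] {P Q : Measure (ι → α)}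
    {s : Finset ι}
    (h : ∀ ω₀ : ι → α, P {ω | ∀ i ∈ s, ω i = ω₀ i} = Q {ω | ∀ i ∈ s, ω i = ω₀ i}) :
    P.map s.restrict = Q.map s.restrict := by
  refine Measure.ext_iff_singleton.mpr fun c => ?_
  obtain ⟨ω₀, rfl⟩ := Finset.restrict_surjective (α := α) s c
  rw [Measure.map_apply (Finset.measurable_restrict s) (measurableSet_singleton _),
    Measure.map_apply (Finset.measurable_restrict s) (measurableSet_singleton _),
    preimage_restrict_singleton, h]

/-- The cylinders over `s` are recovered by marginalising those over `insert i s`. -/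
lemma MeasureTheory.Measure.ext_of_cylinder_insert [Countable α] [Nonempty α] [DecidableEq ι]
    {P Q : Measure (ι → α)} [IsFiniteMeasure P] (i : ι)
    (h : ∀ (s : Finset ι) (ω₀ : ι → α),
      P {ω | ∀ j ∈ insert i s, ω j = ω₀ j} = Q {ω | ∀ j ∈ insert i s, ω j = ω₀ j}) :
    P = Q := by
  have hmarg : ∀ s : Finset ι, Q.map s.restrict = P.map s.restrict := fun s => by
    rw [← Finset.restrict₂_comp_restrict (s.subset_insert i),
      ← Measure.map_map (Finset.measurable_restrict₂ _) (Finset.measurable_restrict _),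
      ← Measure.map_map (Finset.measurable_restrict₂ _) (Finset.measurable_restrict _),
      map_restrict_eq_of_cylinder (h s)]
  exact IsProjectiveLimit.unique (P := fun s => P.map s.restrict) (fun _ => rfl) hmarg

end Cylinder

namespace IsProductMeasure

variable {r η : ℤ → ℝ} {P Q : Measure (ℤ → ℤ)}

lemma unique (hP : IsProductMeasure r η P) (hQ : IsProductMeasure r η Q) : P = Q :=
  have := hP.1
  Measure.ext_of_cylinder_insert 0 fun _ _ => (hP.2 _ _).trans (hQ.2 _ _).symm

lemma integral_eq_of_eqOn {η' : ℤ → ℝ} (hP : IsProductMeasure r η P)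
    (hQ : IsProductMeasure r η' Q) {s : Finset ℤ} (hηs : ∀ i ∈ s, η i = η' i)
    {φ : (ℤ → ℤ) → ℝ} (hφ : DependsOn φ s) : ∫ ω, φ ω ∂P = ∫ ω, φ ω ∂Q := by
  set res : (ℤ → ℤ) → (s → ℤ) := s.restrict
  have hres : Function.Surjective res := Finset.restrict_surjective s
  have hfactor : ∀ ω, φ ω = φ (Function.surjInv hres (res ω)) := fun ω =>
    hφ fun i hi => (congrFun (Function.surjInv_eq hres (res ω)) ⟨i, hi⟩).symm
  have hmarg : P.map res = Q.map res := map_restrict_eq_of_cylinder fun ω₀ => by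
    rw [hP.2, hQ.2]
    exact Finset.prod_congr rfl fun i hi => by rw [hηs i hi]
  have hres_meas : Measurable res := Finset.measurable_restrict s
  have hint : ∀ ν : Measure (ℤ → ℤ),
      ∫ c, φ (Function.surjInv hres c) ∂(ν.map res) = ∫ ω, φ ω ∂ν := fun ν => by
    rw [integral_map hres_meas.aemeasurable Measurable.of_discrete.aestronglyMeasurable]
    exact (integral_congr_ae (ae_of_all _ hfactor)).symm
  rw [← hint P, hmarg, hint Q]

lemma withDensity_eq_smul {i : ℤ} {x : ℝ} (hP : IsProductMeasure r η P)
    (hQ : IsProductMeasure r (Function.update η i x) Q) {w : ℤ → ℝ} (hw0 : ∀ z, 0 ≤ w z)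
    {c : ℝ} (hc : 0 ≤ c) (hw : ∀ z, w z * mu r (η i) z = c * mu r x z) :
    P.withDensity (fun ω => ENNReal.ofReal (w (ω i))) = ENNReal.ofReal c • Q := by
  have := hQ.1
  have := Q.smul_finite (ENNReal.ofReal_ne_top (r := c))
  refine (Measure.ext_of_cylinder_insert i fun s ω₀ => ?_).symm
  have hi : i ∈ insert i s := Finset.mem_insert_self i s
  have hcyl := measurableSet_cylinder (insert i s) ω₀
  have hweight : ∀ ω ∈ {ω : ℤ → ℤ | ∀ j ∈ insert i s, ω j = ω₀ j},
      ENNReal.ofReal (w (ω i)) = ENNReal.ofReal (w (ω₀ i)) := fun ω hω => by rw [hω i hi]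
  rw [Measure.smul_apply, withDensity_apply _ hcyl, setLIntegral_congr_fun hcyl hweight,
    setLIntegral_const, hP.2, hQ.2, ← Finset.mul_prod_erase _ _ hi,
    ← Finset.mul_prod_erase _ _ hi, Function.update_self, smul_eq_mul, ← mul_assoc,
    ← mul_assoc, ← ENNReal.ofReal_mul (hw0 _), ← ENNReal.ofReal_mul hc, hw]
  congr 1
  exact Finset.prod_congr rfl fun j hj => by
    rw [Function.update_of_ne (Finset.ne_of_mem_erase hj)]

lemma integrable_weight_mul {i : ℤ} {x : ℝ} (hP : IsProductMeasure r η P)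
    (hQ : IsProductMeasure r (Function.update η i x) Q) {w : ℤ → ℝ} (hw0 : ∀ z, 0 ≤ w z)
    {c : ℝ} (hc : 0 ≤ c) (hw : ∀ z, w z * mu r (η i) z = c * mu r x z) {g : (ℤ → ℤ) → ℝ}
    (hg : Integrable g Q) : Integrable (fun ω => w (ω i) * g ω) P := by
  have hdens : Measurable fun ω : ℤ → ℤ => ENNReal.ofReal (w (ω i)) :=
    (Measurable.of_discrete (f := fun z : ℤ => ENNReal.ofReal (w z))).comp
      (measurable_pi_apply i)
  have h := (integrable_withDensity_iff_integrable_smul' hdens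
    (ae_of_all _ fun _ => ENNReal.ofReal_lt_top)).mp
    (hP.withDensity_eq_smul hQ hw0 hc hw ▸ hg.smul_measure ENNReal.ofReal_ne_top)
  simpa only [ENNReal.toReal_ofReal (hw0 _), smul_eq_mul] using h

lemma integral_weight_mul {i : ℤ} {x : ℝ} (hP : IsProductMeasure r η P)
    (hQ : IsProductMeasure r (Function.update η i x) Q) {w : ℤ → ℝ} (hw0 : ∀ z, 0 ≤ w z)
    {c : ℝ} (hc : 0 ≤ c) (hw : ∀ z, w z * mu r (η i) z = c * mu r x z) (g : (ℤ → ℤ) → ℝ) :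
    ∫ ω, w (ω i) * g ω ∂P = c * ∫ ω, g ω ∂Q := by
  have hdens : Measurable fun ω : ℤ → ℤ => ENNReal.ofReal (w (ω i)) :=
    (Measurable.of_discrete (f := fun z : ℤ => ENNReal.ofReal (w z))).comp
      (measurable_pi_apply i)
  have h := integral_withDensity_eq_integral_toReal_smul hdens
    (ae_of_all P fun _ => ENNReal.ofReal_lt_top) g
  rw [hP.withDensity_eq_smul hQ hw0 hc hw, integral_smul_measure, ENNReal.toReal_ofReal hc]
    at h
  simpa only [ENNReal.toReal_ofReal (hw0 _), smul_eq_mul] using h.symm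

end IsProductMeasure

lemma brickCfg_eq_add (ω : ℤ → ℤ) (i : ℤ) :
    brickCfg ω i = ω + (Pi.single (i + 1) 1 - Pi.single i 1) := by
  funext j
  simp only [brickCfg, Pi.add_apply, Pi.sub_apply, Pi.single_apply]
  split_ifs <;> subst_vars <;> omega

lemma measurable_brickCfg (i : ℤ) : Measurable (brickCfg · i) := by
  simp_rw [brickCfg_eq_add]
  exact measurable_add_const _

section ExponentialRate

variable {β : ℝ} {r η : ℤ → ℝ} {P Q : Measure (ℤ → ℤ)}
  (hr : ∀ z : ℤ, r z = exp (-β / 2) * exp (β * z))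
include hr

lemma rate_pos (z : ℤ) : 0 < r z := by
  rw [hr]; positivity

lemma rfact_eq_exp (z : ℤ) : rfact r z = exp (β * z ^ 2 / 2) := by
  have key : ∀ n : ℕ, ∏ y ∈ Finset.range n, r (y + 1) = exp (β * n ^ 2 / 2) := by
    intro n
    induction n with
    | zero => simp
    | succ n ih =>
      rw [Finset.prod_range_succ, ih, hr, ← exp_add, ← exp_add]
      push_cast
      ring_nf
  rw [rfact, key, Nat.cast_natAbs, Int.cast_abs, sq_abs]

lemma mu_eq_exp (θ : ℝ) (z : ℤ) : mu r θ z = exp (θ * z - β * z ^ 2 / 2) / Zfun r θ := by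
  rw [mu, rfact_eq_exp hr, exp_sub, div_div, mul_comm (Zfun r θ)]

lemma Zfun_add_mul (θ : ℝ) (k : ℤ) :
    Zfun r (θ + β * k) = exp (θ * k + β * k ^ 2 / 2) * Zfun r θ := by
  simp only [Zfun, rfact_eq_exp hr, ← tsum_mul_left]
  conv_lhs => rw [← (Equiv.addRight k).tsum_eq]
  refine tsum_congr fun z => ?_
  simp only [Equiv.coe_addRight, ← exp_sub, ← exp_add]
  push_cast
  ring_nf

lemma mu_add_mul (θ : ℝ) (k z : ℤ) : mu r (θ + β * k) z = mu r θ (z - k) := by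
  rw [mu_eq_exp hr, mu_eq_exp hr, Zfun_add_mul hr, ← div_div, ← exp_sub]
  push_cast
  ring_nf

lemma rate_mul_mu (θ : ℝ) (z : ℤ) : r z * mu r θ z = exp θ * mu r (θ + β) z := by
  have h := mu_add_mul hr θ 1 z
  rw [Int.cast_one, mul_one] at h
  rw [h, mu_eq_exp hr, mu_eq_exp hr, hr, ← mul_div_assoc, ← mul_div_assoc, ← exp_add, ← exp_add,
    ← exp_add]
  push_cast
  ring_nf

lemma rate_neg_mul_mu (θ : ℝ) (z : ℤ) : r (-z) * mu r θ z = exp (-θ) * mu r (θ - β) z := by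
  have h := mu_add_mul hr (θ - β) 1 (z + 1)
  rw [Int.cast_one, mul_one, sub_add_cancel, add_sub_cancel_right] at h
  rw [← h, mu_eq_exp hr, mu_eq_exp hr, hr, ← mul_div_assoc, ← mul_div_assoc, ← exp_add,
    ← exp_add, ← exp_add]
  push_cast
  ring_nf

lemma IsProductMeasure.map_add_const (hP : IsProductMeasure r η P) (d : ℤ → ℤ) :
    IsProductMeasure r (fun j => η j + β * d j) (P.map (· + d)) := by
  have := hP.1
  have hmeas : Measurable fun ω : ℤ → ℤ => ω + d := measurable_add_const d
  refine ⟨Measure.isProbabilityMeasure_map hmeas.aemeasurable, fun s c => ?_⟩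
  have hpre : (· + d) ⁻¹' {ω : ℤ → ℤ | ∀ i ∈ s, ω i = c i} = {ω | ∀ i ∈ s, ω i = (c - d) i} := by
    ext ω
    simp [eq_sub_iff_add_eq]
  rw [Measure.map_apply hmeas (measurableSet_cylinder s c), hpre, hP.2]
  exact Finset.prod_congr rfl fun i _ => by rw [mu_add_mul hr, Pi.sub_apply]

lemma IsProductMeasure.map_brickCfg {η' : ℤ → ℝ} (hP : IsProductMeasure r η P)
    (hQ : IsProductMeasure r η' Q) (i : ℤ) (hi : η' i = η i - β)
    (hi1 : η' (i + 1) = η (i + 1) + β) (hj : ∀ j, j ≠ i → j ≠ i + 1 → η' j = η j) :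
    P.map (brickCfg · i) = Q := by
  have htilt : (fun j => η j + β * ((Pi.single (i + 1) 1 - Pi.single i 1 : ℤ → ℤ) j : ℝ)) = η' := by
    funext j
    by_cases hji : j = i
    · subst hji
      simp [hi, sub_eq_add_neg]
    · by_cases hji1 : j = i + 1
      · subst hji1
        simp [hi1]
      · simp [hji, hji1, hj j hji hji1]
  rw [show (brickCfg · i) = (· + (Pi.single (i + 1) 1 - Pi.single i 1)) from
    funext fun ω => brickCfg_eq_add ω i]
  exact (hP.map_add_const hr _).unique (htilt ▸ hQ)

end ExponentialRate

section Generator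

variable {β : ℝ} {r : ℤ → ℝ} (hr : ∀ z : ℤ, r z = exp (-β / 2) * exp (β * z))
  {M : (ℤ → ℝ) → Measure (ℤ → ℤ)} (hM : ∀ η, IsProductMeasure r η (M η))
  {φ : (ℤ → ℤ) → ℝ} (hφ : Measurable φ) {C : ℝ} (hC : ∀ ω, |φ ω| ≤ C)
include hr hM hφ

lemma integral_comp_brickCfg_update_add (θ : ℤ → ℝ) (i : ℤ) :
    ∫ ω, φ (brickCfg ω i) ∂(M (Function.update θ i (θ i + β)))
      = ∫ ω, φ ω ∂(M (Function.update θ (i + 1) (θ (i + 1) + β))) := by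
  have hmap := (hM (Function.update θ i (θ i + β))).map_brickCfg hr
    (hM (Function.update θ (i + 1) (θ (i + 1) + β))) i (by simp) (by simp)
    (fun j hj hj1 => by simp [hj, hj1])
  rw [← hmap, integral_map (measurable_brickCfg i).aemeasurable hφ.aestronglyMeasurable]

lemma integral_comp_brickCfg_update_sub (θ : ℤ → ℝ) (i : ℤ) :
    ∫ ω, φ (brickCfg ω i) ∂(M (Function.update θ (i + 1) (θ (i + 1) - β)))
      = ∫ ω, φ ω ∂(M (Function.update θ i (θ i - β))) := by
  have hmap := (hM (Function.update θ (i + 1) (θ (i + 1) - β))).map_brickCfg hr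
    (hM (Function.update θ i (θ i - β))) i (by simp) (by simp)
    (fun j hj hj1 => by simp [hj, hj1])
  rw [← hmap, integral_map (measurable_brickCfg i).aemeasurable hφ.aestronglyMeasurable]

include hC

lemma integral_rate_mul_brickCfg_sub (θ : ℤ → ℝ) (i : ℤ) :
    ∫ ω, (r (ω i) + r (-(ω (i + 1)))) * (φ (brickCfg ω i) - φ ω) ∂(M θ)
      = exp (θ i) * ((∫ ω, φ ω ∂(M (Function.update θ (i + 1) (θ (i + 1) + β))))
            - ∫ ω, φ ω ∂(M (Function.update θ i (θ i + β))))
        + exp (-θ (i + 1)) * ((∫ ω, φ ω ∂(M (Function.update θ i (θ i - β))))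
            - ∫ ω, φ ω ∂(M (Function.update θ (i + 1) (θ (i + 1) - β)))) := by
  have hφint : ∀ η, Integrable φ (M η) := fun η =>
    have := (hM η).1
    Integrable.of_bound hφ.aestronglyMeasurable C (ae_of_all _ hC)
  have hbrick_int : ∀ η, Integrable (fun ω => φ (brickCfg ω i)) (M η) := fun η =>
    have := (hM η).1
    Integrable.of_bound (hφ.comp (measurable_brickCfg i)).aestronglyMeasurable C
      (ae_of_all _ fun ω => hC _)
  have hΔint : ∀ η, Integrable (fun ω => φ (brickCfg ω i) - φ ω) (M η) := fun η =>
    (hbrick_int η).sub (hφint η)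
  have hup := (hM θ).integrable_weight_mul (hM (Function.update θ i (θ i + β)))
    (fun z => (rate_pos hr z).le) (exp_pos _).le (rate_mul_mu hr _) (hΔint _)
  have hdown := (hM θ).integrable_weight_mul (hM (Function.update θ (i + 1) (θ (i + 1) - β)))
    (w := fun z => r (-z)) (fun z => (rate_pos hr _).le) (exp_pos _).le (rate_neg_mul_mu hr _)
    (hΔint _)
  simp_rw [add_mul]
  rw [integral_add hup hdown,
    (hM θ).integral_weight_mul (hM _) (fun z => (rate_pos hr z).le) (exp_pos _).le
      (rate_mul_mu hr _),
    (hM θ).integral_weight_mul (hM _) (w := fun z => r (-z)) (fun z => (rate_pos hr _).le)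
      (exp_pos _).le (rate_neg_mul_mu hr _),
    integral_sub (hbrick_int _) (hφint _), integral_sub (hbrick_int _) (hφint _),
    integral_comp_brickCfg_update_add hr hM hφ, integral_comp_brickCfg_update_sub hr hM hφ]

end Generator

lemma Finset.sum_Icc_add' {M α : Type*} [AddCommMonoid M] [AddCommMonoid α] [PartialOrder α]
    [IsOrderedCancelAddMonoid α] [ExistsAddOfLE α] [LocallyFiniteOrder α]
    (f : α → M) (a b c : α) :
    ∑ x ∈ Finset.Icc a b, f (x + c) = ∑ x ∈ Finset.Icc (a + c) (b + c), f x := by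
  rw [← Finset.map_add_right_Icc, Finset.sum_map]
  rfl

section SummationByParts

variable {a b : ℤ} {g : ℤ → ℝ} (hg : ∀ j ∉ Finset.Icc a b, g j = 0)
include hg

lemma sum_Icc_by_parts_of_support (F G : ℤ → ℝ) :
    ∑ i ∈ Finset.Icc (a - 1) b, (F i * g (i + 1) - G i * g i)
      = ∑ j ∈ Finset.Icc a b, (F (j - 1) - G j) * g j := by
  have hzero : ∀ (K : ℤ → ℝ) (s : Finset ℤ), ∀ j ∈ s, j ∉ Finset.Icc a b → K j * g j = 0 :=
    fun K s j _ hj => by rw [hg j hj, mul_zero]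
  have hshift : ∑ i ∈ Finset.Icc (a - 1) b, F i * g (i + 1)
      = ∑ j ∈ Finset.Icc a b, F (j - 1) * g j := by
    have := Finset.sum_Icc_add' (fun j => F (j - 1) * g j) (a - 1) b 1
    simp only [add_sub_cancel_right, sub_add_cancel] at this
    rw [this, Finset.sum_subset (Finset.Icc_subset_Icc_right (show b ≤ b + 1 by omega))
      (hzero (fun j => F (j - 1)) _)]
  rw [Finset.sum_sub_distrib, hshift,
    ← Finset.sum_subset (Finset.Icc_subset_Icc_left (show a - 1 ≤ a by omega)) (hzero G _),
    ← Finset.sum_sub_distrib]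
  simp_rw [sub_mul]

lemma sum_Icc_mul_succ_sub_of_support (F : ℤ → ℝ) :
    ∑ i ∈ Finset.Icc (a - 1) b, F i * (g (i + 1) - g i)
      = ∑ i ∈ Finset.Icc (a - 1) (b - 1), (F i - F (i + 1)) * g (i + 1) := by
  have := Finset.sum_Icc_add' (fun j => (F (j - 1) - F j) * g j) (a - 1) (b - 1) 1
  simp only [add_sub_cancel_right, sub_add_cancel] at this
  simp_rw [mul_sub]
  rw [sum_Icc_by_parts_of_support hg, this]

lemma sum_Icc_succ_mul_sub_succ_of_support (F : ℤ → ℝ) :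
    ∑ i ∈ Finset.Icc (a - 1) b, F (i + 1) * (g i - g (i + 1))
      = ∑ i ∈ Finset.Icc (a + 1) (b + 1), (F i - F (i - 1)) * g (i - 1) := by
  have := Finset.sum_Icc_add' (fun j => (F (j + 1) - F j) * g j) (a + 1) (b + 1) (-1)
  simp only [← sub_eq_add_neg, sub_add_cancel, add_sub_cancel_right] at this
  calc ∑ i ∈ Finset.Icc (a - 1) b, F (i + 1) * (g i - g (i + 1))
      = ∑ i ∈ Finset.Icc (a - 1) b, (-F (i + 1) * g (i + 1) - -F (i + 1) * g i) :=
        Finset.sum_congr rfl fun i _ => by ring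
    _ = ∑ j ∈ Finset.Icc a b, (-F (j - 1 + 1) - -F (j + 1)) * g j :=
        sum_Icc_by_parts_of_support hg _ _
    _ = ∑ j ∈ Finset.Icc a b, (F (j + 1) - F j) * g j :=
        Finset.sum_congr rfl fun j _ => by rw [sub_add_cancel]; ring
    _ = _ := this.symm

end SummationByParts

theorem measure_evolution_exponential_general (β : ℝ) (r : ℤ → ℝ)
    (hr : ∀ z : ℤ, r z = Real.exp (-β / 2) * Real.exp (β * z))
    (θv : ℤ → ℝ)
    (M : (ℤ → ℝ) → Measure (ℤ → ℤ)) (hM : ∀ η : ℤ → ℝ, IsProductMeasure r η (M η))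
    (φ : (ℤ → ℤ) → ℝ) (hmeas : Measurable φ) (hbdd : ∃ C : ℝ, ∀ ω, |φ ω| ≤ C)
    (a b : ℤ)
    (hdep : ∀ ω ω' : ℤ → ℤ, (∀ i : ℤ, a ≤ i → i ≤ b → ω i = ω' i) → φ ω = φ ω') :
    (∑ i ∈ Finset.Icc (a - 1) b,
        ∫ ω, (r (ω i) + r (-(ω (i + 1)))) * (φ (brickCfg ω i) - φ ω) ∂(M θv))
      = (∑ i ∈ Finset.Icc (a - 1) (b - 1),
          (Real.exp (θv i) - Real.exp (θv (i + 1))) *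
            ((∫ ω, φ ω ∂(M (Function.update θv (i + 1) (θv (i + 1) + β))))
              - ∫ ω, φ ω ∂(M θv)))
        + ∑ i ∈ Finset.Icc (a + 1) (b + 1),
            (Real.exp (-θv i) - Real.exp (-θv (i - 1))) *
              ((∫ ω, φ ω ∂(M (Function.update θv (i - 1) (θv (i - 1) - β))))
                - ∫ ω, φ ω ∂(M θv)) := by
  obtain ⟨C, hC⟩ := hbdd
  have hfar : ∀ j ∉ Finset.Icc a b, ∀ x : ℝ,
      ∫ ω, φ ω ∂(M (Function.update θv j x)) = ∫ ω, φ ω ∂(M θv) := fun j hj x =>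
    (hM _).integral_eq_of_eqOn (hM θv)
      (fun i hi => Function.update_of_ne (ne_of_mem_of_not_mem hi hj) _ _)
      fun ω ω' h => hdep ω ω' fun i hai hib => h i (by simp [hai, hib])
  set g : ℤ → ℝ := fun j =>
    (∫ ω, φ ω ∂(M (Function.update θv j (θv j + β)))) - ∫ ω, φ ω ∂(M θv)
  set h : ℤ → ℝ := fun j =>
    (∫ ω, φ ω ∂(M (Function.update θv j (θv j - β)))) - ∫ ω, φ ω ∂(M θv)
  have hg : ∀ j ∉ Finset.Icc a b, g j = 0 := fun j hj => sub_eq_zero.mpr (hfar j hj _)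
  have hh : ∀ j ∉ Finset.Icc a b, h j = 0 := fun j hj => sub_eq_zero.mpr (hfar j hj _)
  calc _ = ∑ i ∈ Finset.Icc (a - 1) b,
        (exp (θv i) * (g (i + 1) - g i) + exp (-θv (i + 1)) * (h i - h (i + 1))) :=
        Finset.sum_congr rfl fun i _ => by
          rw [integral_rate_mul_brickCfg_sub hr hM hmeas hC]
          simp only [g, h, sub_sub_sub_cancel_right]
    _ = _ := by
      rw [Finset.sum_add_distrib, sum_Icc_mul_succ_sub_of_support hg,
        sum_Icc_succ_mul_sub_succ_of_support hh (fun j => exp (-θv j))]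

theorem measure_evolution_exponential (β : ℝ) (hβ : 0 < β) (r : ℤ → ℝ)
    (hr : ∀ z : ℤ, r z = Real.exp (-β / 2) * Real.exp (β * z))
    (θv : ℤ → ℝ)
    (M : (ℤ → ℝ) → Measure (ℤ → ℤ)) (hM : ∀ η : ℤ → ℝ, IsProductMeasure r η (M η))
    (φ : (ℤ → ℤ) → ℝ) (hmeas : Measurable φ) (hbdd : ∃ C : ℝ, ∀ ω, |φ ω| ≤ C)
    (a b : ℤ) (hab : a ≤ b)
    (hdep : ∀ ω ω' : ℤ → ℤ, (∀ i : ℤ, a ≤ i → i ≤ b → ω i = ω' i) → φ ω = φ ω') :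
    (∑ i ∈ Finset.Icc (a - 1) b,
        ∫ ω, (r (ω i) + r (-(ω (i + 1)))) * (φ (brickCfg ω i) - φ ω) ∂(M θv))
      = (∑ i ∈ Finset.Icc (a - 1) (b - 1),
          (Real.exp (θv i) - Real.exp (θv (i + 1))) *
            ((∫ ω, φ ω ∂(M (Function.update θv (i + 1) (θv (i + 1) + β))))
              - ∫ ω, φ ω ∂(M θv)))
        + ∑ i ∈ Finset.Icc (a + 1) (b + 1),
            (Real.exp (-θv i) - Real.exp (-θv (i - 1))) *
              ((∫ ω, φ ω ∂(M (Function.update θv (i - 1) (θv (i - 1) - β))))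
                - ∫ ω, φ ω ∂(M θv)) :=
  measure_evolution_exponential_general β r hr θv M hM φ hmeas hbdd a b hdep
end
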